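/- Let M = [γ(1/p − 1)] for 0 < p ≤ 1, and L > γ + κ(M+1) where κ ≥ 1 satisfies |A_s y| ≤ C s^κ |y| for s ≥ 1. Then for all y ∈ B(0,1) and x with ρ(x) ≥ 2: ∫_0^∞ (t^{-γ} |A_{t^{-1}} y|^{M+1} (1+ρ(x)/t)^{-L})² dt/t ≤ C ρ(x)^{-2(γ+M+1)}. -/

import Mathlib

/-!
For `t ≤ 1` the growth bound gives `|A_{t⁻¹} y| ≤ C₀ t^{-κ}`, while for `t ≥ 1` the contraction
`|A_t x| ≤ t |x|` (a Gronwall argument from `⟨Px, x⟩ ≥ |x|²`) and `|y| ≤ ρ(y) < 1` give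
`|A_{t⁻¹} y| ≤ t⁻¹`. Combined with `(1 + ρ(x)/t)^{-L} ≤ (t/ρ(x))^L` below `ρ(x)` and `≤ 1` above it,
the integrand is bounded by a power of `t` on each of `(0, 1]`, `(1, ρ(x)]` and `(ρ(x), ∞)`, and the
three power integrals are `O(ρ(x)^{-2(γ+M+1)})` because `L > γ + κ(M+1)` and `M ≥ 0`.
-/

open MeasureTheory Real Set Matrix
open scoped FourierTransform ENNReal NNReal RealInnerProductSpace

noncomputable section

abbrev Euc (n : ℕ) := EuclideanSpace ℝ (Fin n)

variable {n : ℕ}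

/-- Action of a matrix on Euclidean space. -/
def mulVecEuc (P : Matrix (Fin n) (Fin n) ℝ) (x : Euc n) : Euc n :=
  (EuclideanSpace.equiv (Fin n) ℝ).symm (P.mulVec (EuclideanSpace.equiv (Fin n) ℝ x))

/-- The parabolic dilation `A_t = exp((log t) P)` acting on `ℝⁿ`. -/
def Aact (P : Matrix (Fin n) (Fin n) ℝ) (t : ℝ) (x : Euc n) : Euc n :=
  mulVecEuc (NormedSpace.exp ((Real.log t) • P)) x

/-- The hypothesis `⟨Px, x⟩ ≥ ⟨x, x⟩`. -/
def GoodMatrix (P : Matrix (Fin n) (Fin n) ℝ) : Prop :=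
  ∀ x : Euc n, ⟪x, x⟫ ≤ ⟪mulVecEuc P x, x⟫

/-- `ρ` is the norm function associated with the dilations `A_t`:
`ρ 0 = 0` and for `x ≠ 0`, `ρ x` is positive with `|A_{(ρ x)⁻¹} x| = 1`. -/
def IsRho (P : Matrix (Fin n) (Fin n) ℝ) (ρ : Euc n → ℝ) : Prop :=
  ρ 0 = 0 ∧ ∀ x : Euc n, x ≠ 0 → 0 < ρ x ∧ ‖Aact P (ρ x)⁻¹ x‖ = 1

/-- Non-isotropic dilate `φ_t(x) = t^{-γ} φ(A_t^{-1} x)`, `γ = trace P`. -/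
def dil (P : Matrix (Fin n) (Fin n) ℝ) (φ : Euc n → ℂ) (t : ℝ) (x : Euc n) : ℂ :=
  (t ^ (-(P.trace)) : ℝ) • φ (Aact P t⁻¹ x)

/-- Convolution. -/
def conv (f g : Euc n → ℂ) (x : Euc n) : ℂ := ∫ y, f y * g (x - y)

/-- Peetre maximal function relative to `ρ`. -/
def peetre {E : Type*} [NormedAddCommGroup E] (ρ : Euc n → ℝ) (N R : ℝ)
    (F : Euc n → E) (x : Euc n) : ℝ≥0∞ :=
  ⨆ y : Euc n, (‖F (x - y)‖₊ : ℝ≥0∞) / ENNReal.ofReal ((1 + R * ρ y) ^ N)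

/-- Hardy–Littlewood maximal operator relative to the `ρ`-balls. -/
def maxρ {E : Type*} [NormedAddCommGroup E] (ρ : Euc n → ℝ) (f : Euc n → E)
    (x : Euc n) : ℝ≥0∞ :=
  ⨆ (c : Euc n) (r : ℝ) (_ : 0 < r) (_ : ρ (x - c) < r),
    (volume {y : Euc n | ρ (c - y) < r})⁻¹ * ∫⁻ y in {y : Euc n | ρ (c - y) < r}, ‖f y‖₊

/-- Muckenhoupt `A_p` class relative to `ρ`-balls. -/
def IsAp (ρ : Euc n → ℝ) (w : Euc n → ℝ) (p : ℝ) : Prop :=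
  ∃ C : ℝ≥0, ∀ (c : Euc n) (r : ℝ), 0 < r →
    (∫⁻ y in {y : Euc n | ρ (c - y) < r}, ENNReal.ofReal (w y)) *
      (∫⁻ y in {y : Euc n | ρ (c - y) < r}, ENNReal.ofReal (w y ^ (-(1 / (p - 1)))))
        ^ (p - 1)
      ≤ C * (volume {y : Euc n | ρ (c - y) < r}) ^ p

section Dilations

variable {P : Matrix (Fin n) (Fin n) ℝ}

lemma mulVecEuc_mul (A B : Matrix (Fin n) (Fin n) ℝ) (x : Euc n) :
    mulVecEuc (A * B) x = mulVecEuc A (mulVecEuc B x) := by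
  simp [mulVecEuc, Matrix.mulVec_mulVec, PiLp.coe_continuousLinearEquiv]

lemma mulVecEuc_one (x : Euc n) : mulVecEuc (1 : Matrix (Fin n) (Fin n) ℝ) x = x := by
  simp [mulVecEuc]

lemma hasDerivAt_mulVecEuc_exp_smul (P : Matrix (Fin n) (Fin n) ℝ) (x : Euc n) (s : ℝ) :
    HasDerivAt (fun s : ℝ => mulVecEuc (NormedSpace.exp (s • P)) x)
      (mulVecEuc P (mulVecEuc (NormedSpace.exp (s • P)) x)) s := by
  let _ : NormedRing (Matrix (Fin n) (Fin n) ℝ) := Matrix.linftyOpNormedRing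
  let _ : NormedAlgebra ℝ (Matrix (Fin n) (Fin n) ℝ) := Matrix.linftyOpNormedAlgebra
  let evalAt : Matrix (Fin n) (Fin n) ℝ →ₗ[ℝ] Euc n :=
    { toFun := fun A => mulVecEuc A x
      map_add' := fun A B => by simp [mulVecEuc, Matrix.add_mulVec]
      map_smul' := fun c A => by simp [mulVecEuc, Matrix.smul_mulVec] }
  have h := evalAt.toContinuousLinearMap.hasFDerivAt.comp_hasDerivAt s
    (hasDerivAt_exp_smul_const' P s)
  rwa [← mulVecEuc_mul]

/-- With `v s = exp(sP) x`, `d/ds ‖v‖² = 2⟨v, Pv⟩ ≥ 2‖v‖²`. -/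
lemma GoodMatrix.monotone_exp_mul_norm_sq (hP : GoodMatrix P) (x : Euc n) :
    Monotone fun s : ℝ => Real.exp (-2 * s) * ‖mulVecEuc (NormedSpace.exp (s • P)) x‖ ^ 2 := by
  refine monotone_of_hasDerivAt_nonneg (fun s => (((hasDerivAt_id s).const_mul (-2)).exp).mul
    (hasDerivAt_mulVecEuc_exp_smul P x s).norm_sq) fun s => ?_
  set v := mulVecEuc (NormedSpace.exp (s • P)) x
  have hv : ‖v‖ ^ 2 ≤ ⟪v, mulVecEuc P v⟫ := by
    rw [← real_inner_self_eq_norm_sq, real_inner_comm (mulVecEuc P v) v]; exact hP v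
  have := Real.exp_pos (-2 * s)
  simp only [Pi.zero_apply, id, mul_one]
  nlinarith

lemma GoodMatrix.norm_Aact_le (hP : GoodMatrix P) (x : Euc n) {t : ℝ} (ht0 : 0 < t)
    (ht1 : t ≤ 1) : ‖Aact P t x‖ ≤ t * ‖x‖ := by
  have h := hP.monotone_exp_mul_norm_sq x (log_nonpos ht0.le ht1)
  simp only [mul_zero, Real.exp_zero, zero_smul, NormedSpace.exp_zero, mulVecEuc_one,
    one_mul] at h
  rw [show -2 * log t = log (t ^ 2)⁻¹ by rw [log_inv, log_pow]; push_cast; ring,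
    exp_log (by positivity), inv_mul_le_iff₀ (by positivity), ← mul_pow] at h
  exact (pow_le_pow_iff_left₀ (norm_nonneg _) (by positivity) two_ne_zero).mp h

lemma Aact_Aact {a b : ℝ} (ha : 0 < a) (hb : 0 < b) (x : Euc n) :
    Aact P a (Aact P b x) = Aact P (a * b) x := by
  rw [Aact, Aact, Aact, ← mulVecEuc_mul, log_mul ha.ne' hb.ne', add_smul,
    Matrix.exp_add_of_commute _ _ (((Commute.refl P).smul_left _).smul_right _)]

lemma Aact_one (x : Euc n) : Aact P 1 x = x := by
  simp [Aact, mulVecEuc_one]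

lemma IsRho.norm_le (hP : GoodMatrix P) {ρ : Euc n → ℝ} (hρ : IsRho P ρ) {y : Euc n}
    (hy : ρ y ≤ 1) : ‖y‖ ≤ ρ y := by
  rcases eq_or_ne y 0 with rfl | hy0
  · simp [hρ.1]
  obtain ⟨hpos, hnorm⟩ := hρ.2 y hy0
  calc ‖y‖ = ‖Aact P (ρ y) (Aact P (ρ y)⁻¹ y)‖ := by
        rw [Aact_Aact hpos (inv_pos.mpr hpos), mul_inv_cancel₀ hpos.ne', Aact_one]
    _ ≤ ρ y * ‖Aact P (ρ y)⁻¹ y‖ := hP.norm_Aact_le _ hpos hy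
    _ = ρ y := by rw [hnorm, mul_one]

lemma GoodMatrix.one_le_diag (hP : GoodMatrix P) (i : Fin n) : 1 ≤ P i i := by
  simpa [mulVecEuc, PiLp.coe_continuousLinearEquiv, EuclideanSpace.inner_single_right,
    Matrix.mulVec_single, real_inner_self_eq_norm_sq] using hP (EuclideanSpace.single i 1)

lemma GoodMatrix.trace_nonneg (hP : GoodMatrix P) : 0 ≤ P.trace :=
  Finset.sum_nonneg fun i _ => zero_le_one.trans (hP.one_le_diag i)

end Dilations

section IntegralEstimate

lemma ofReal_rpow_div_self {t : ℝ} (ht : 0 < t) (e : ℝ) :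
    ENNReal.ofReal (t ^ e) / ENNReal.ofReal t = ENNReal.ofReal (t ^ (e - 1)) := by
  rw [← ENNReal.ofReal_div_of_pos ht, rpow_sub_one ht.ne']

lemma lintegral_Ioc_zero_rpow_div_self {e R : ℝ} (he : 0 < e) (hR : 0 ≤ R) :
    ∫⁻ t in Ioc 0 R, ENNReal.ofReal (t ^ e) / ENNReal.ofReal t = ENNReal.ofReal (R ^ e / e) := by
  have he' : -1 < e - 1 := by linarith
  rw [setLIntegral_congr_fun measurableSet_Ioc fun t ht => ofReal_rpow_div_self ht.1 e,
    ← ofReal_integral_eq_lintegral_ofReal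
      ((intervalIntegrable_iff_integrableOn_Ioc_of_le hR).mp
        (intervalIntegral.intervalIntegrable_rpow' he'))
      ((ae_restrict_iff' measurableSet_Ioc).mpr
        (ae_of_all _ fun t ht => (rpow_pos_of_pos ht.1 _).le)),
    ← intervalIntegral.integral_of_le hR, integral_rpow (Or.inl he'), sub_add_cancel,
    zero_rpow he.ne', sub_zero]

lemma lintegral_Ioi_rpow_div_self {e R : ℝ} (he : e < 0) (hR : 0 < R) :
    ∫⁻ t in Ioi R, ENNReal.ofReal (t ^ e) / ENNReal.ofReal t = ENNReal.ofReal (R ^ e / -e) := by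
  have he' : e - 1 < -1 := by linarith
  rw [setLIntegral_congr_fun measurableSet_Ioi fun t ht => ofReal_rpow_div_self (hR.trans ht) e,
    ← ofReal_integral_eq_lintegral_ofReal (integrableOn_Ioi_rpow_of_lt he' hR)
      ((ae_restrict_iff' measurableSet_Ioi).mpr
        (ae_of_all _ fun t ht => (rpow_pos_of_pos (hR.trans ht) _).le)),
    integral_Ioi_rpow_of_lt he' hR, sub_add_cancel, neg_div, div_neg]

lemma setLIntegral_sq_div_self_le {s : Set ℝ} (hs : MeasurableSet s) (hs0 : ∀ t ∈ s, 0 ≤ t)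
    {f : ℝ → ℝ} {c e : ℝ} (hf0 : ∀ t ∈ s, 0 ≤ f t) (hf : ∀ t ∈ s, f t ≤ c * t ^ e) :
    ∫⁻ t in s, ENNReal.ofReal (f t ^ 2) / ENNReal.ofReal t
      ≤ ENNReal.ofReal (c ^ 2) * ∫⁻ t in s, ENNReal.ofReal (t ^ (2 * e)) / ENNReal.ofReal t := by
  rw [← lintegral_const_mul' _ _ ENNReal.ofReal_ne_top]
  refine setLIntegral_mono' hs fun t ht => ?_
  rw [← mul_div_assoc, ← ENNReal.ofReal_mul (sq_nonneg c)]
  gcongr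
  calc f t ^ 2 ≤ (c * t ^ e) ^ 2 := pow_le_pow_left₀ (hf0 t ht) (hf t ht) 2
    _ = c ^ 2 * t ^ (2 * e) := by rw [mul_pow, mul_comm 2 e, rpow_mul (hs0 t ht), rpow_two]

lemma rpow_neg_mul_rpow_le {t g D k γ m : ℝ} (ht : 0 < t) (hg0 : 0 ≤ g) (hg : g ≤ D * t ^ (-k))
    (hm : 0 ≤ m) : t ^ (-γ) * g ^ m ≤ D ^ m * t ^ (-(γ + k * m)) := by
  have hD : 0 ≤ D := nonneg_of_mul_nonneg_left (hg0.trans hg) (rpow_pos_of_pos ht _)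
  calc t ^ (-γ) * g ^ m ≤ t ^ (-γ) * (D * t ^ (-k)) ^ m := by gcongr
    _ = D ^ m * t ^ (-(γ + k * m)) := by
      rw [mul_rpow hD (rpow_nonneg ht.le _), ← rpow_mul ht.le, neg_add, rpow_add ht]
      ring_nf

lemma one_add_div_rpow_neg_le {R t L : ℝ} (hR : 0 < R) (ht : 0 < t) (hL : 0 ≤ L) :
    (1 + R / t) ^ (-L) ≤ R ^ (-L) * t ^ L := by
  calc (1 + R / t) ^ (-L) ≤ (R / t) ^ (-L) :=
        rpow_le_rpow_of_nonpos (by positivity) (by linarith) (by linarith)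
    _ = R ^ (-L) * t ^ L := by
      rw [div_rpow hR.le ht.le, rpow_neg ht.le, div_inv_eq_mul]

lemma rpow_neg_sq {R : ℝ} (hR : 0 ≤ R) (L : ℝ) : (R ^ (-L)) ^ 2 = R ^ (-(2 * L)) := by
  rw [← rpow_two, ← rpow_mul hR]; ring_nf

/-- The integrand of the estimate, with `g t` standing for `‖A_{t⁻¹} y‖` and `R` for `ρ x`. -/
def dilationKernel (γ m L R : ℝ) (g : ℝ → ℝ) (t : ℝ) : ℝ :=
  t ^ (-γ) * g t ^ m * (1 + R / t) ^ (-L)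

variable {γ m k D L R t : ℝ} {g : ℝ → ℝ}

lemma dilationKernel_nonneg (ht : 0 < t) (hR : 0 ≤ R) (hg : 0 ≤ g t) :
    0 ≤ dilationKernel γ m L R g t :=
  mul_nonneg (mul_nonneg (rpow_nonneg ht.le _) (rpow_nonneg hg _))
    (rpow_nonneg (by positivity) _)

lemma dilationKernel_le_mul_rpow_neg (ht : 0 < t) (hR : 0 < R) (hL : 0 ≤ L) (hm : 0 ≤ m)
    (hg0 : 0 ≤ g t) (hg : g t ≤ D * t ^ (-k)) :
    dilationKernel γ m L R g t ≤ D ^ m * R ^ (-L) * t ^ (L - (γ + k * m)) :=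
  calc dilationKernel γ m L R g t ≤ D ^ m * t ^ (-(γ + k * m)) * (R ^ (-L) * t ^ L) := by
        have hg' := rpow_neg_mul_rpow_le (γ := γ) ht hg0 hg hm
        exact mul_le_mul hg' (one_add_div_rpow_neg_le hR ht hL) (rpow_nonneg (by positivity) _)
          ((mul_nonneg (rpow_nonneg ht.le _) (rpow_nonneg hg0 _)).trans hg')
    _ = D ^ m * R ^ (-L) * t ^ (L - (γ + k * m)) := by
        rw [sub_eq_neg_add, rpow_add ht]; ring

lemma dilationKernel_le (ht : 0 < t) (hR : 0 ≤ R) (hL : 0 ≤ L) (hm : 0 ≤ m)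
    (hg0 : 0 ≤ g t) (hg : g t ≤ D * t ^ (-k)) :
    dilationKernel γ m L R g t ≤ D ^ m * t ^ (-(γ + k * m)) :=
  calc dilationKernel γ m L R g t ≤ D ^ m * t ^ (-(γ + k * m)) * 1 := by
        have hg' := rpow_neg_mul_rpow_le (γ := γ) ht hg0 hg hm
        exact mul_le_mul hg' (rpow_le_one_of_one_le_of_nonpos (by simp; positivity) (by linarith))
          (rpow_nonneg (by positivity) _)
          ((mul_nonneg (rpow_nonneg ht.le _) (rpow_nonneg hg0 _)).trans hg')
    _ = D ^ m * t ^ (-(γ + k * m)) := mul_one _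

lemma setLIntegral_dilationKernel_le_of_subset_Ioc {s : Set ℝ} {T : ℝ} (hs : MeasurableSet s)
    (hsT : s ⊆ Ioc 0 T) (hT : 0 ≤ T) (hR : 0 < R) (hL0 : 0 ≤ L) (hm : 0 ≤ m) (hL : γ + k * m < L)
    (hg0 : ∀ t ∈ s, 0 ≤ g t) (hg : ∀ t ∈ s, g t ≤ D * t ^ (-k)) :
    ∫⁻ t in s, ENNReal.ofReal (dilationKernel γ m L R g t ^ 2) / ENNReal.ofReal t
      ≤ ENNReal.ofReal ((D ^ m) ^ 2 / (2 * (L - (γ + k * m))) * R ^ (-(2 * L))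
          * T ^ (2 * (L - (γ + k * m)))) := by
  calc _ ≤ ENNReal.ofReal ((D ^ m * R ^ (-L)) ^ 2)
          * ∫⁻ t in s, ENNReal.ofReal (t ^ (2 * (L - (γ + k * m)))) / ENNReal.ofReal t :=
        setLIntegral_sq_div_self_le hs (fun t ht => (hsT ht).1.le)
          (fun t ht => dilationKernel_nonneg (hsT ht).1 hR.le (hg0 t ht))
          (fun t ht => dilationKernel_le_mul_rpow_neg (hsT ht).1 hR hL0 hm (hg0 t ht) (hg t ht))
    _ ≤ ENNReal.ofReal ((D ^ m * R ^ (-L)) ^ 2)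
          * ∫⁻ t in Ioc 0 T, ENNReal.ofReal (t ^ (2 * (L - (γ + k * m)))) / ENNReal.ofReal t := by
        gcongr
    _ = _ := by
        rw [lintegral_Ioc_zero_rpow_div_self (by linarith) hT,
          ← ENNReal.ofReal_mul (sq_nonneg _), mul_pow, rpow_neg_sq hR.le]
        ring_nf

lemma setLIntegral_Ioi_dilationKernel_le (hR : 0 < R) (hL0 : 0 ≤ L) (hm : 0 ≤ m)
    (ha : 0 < γ + k * m) (hg0 : ∀ t ∈ Ioi R, 0 ≤ g t) (hg : ∀ t ∈ Ioi R, g t ≤ D * t ^ (-k)) :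
    ∫⁻ t in Ioi R, ENNReal.ofReal (dilationKernel γ m L R g t ^ 2) / ENNReal.ofReal t
      ≤ ENNReal.ofReal ((D ^ m) ^ 2 / (2 * (γ + k * m)) * R ^ (-(2 * (γ + k * m)))) :=
  calc _ ≤ ENNReal.ofReal ((D ^ m) ^ 2)
          * ∫⁻ t in Ioi R, ENNReal.ofReal (t ^ (2 * -(γ + k * m))) / ENNReal.ofReal t :=
        setLIntegral_sq_div_self_le measurableSet_Ioi (fun t ht => (hR.trans ht).le)
          (fun t ht => dilationKernel_nonneg (hR.trans ht) hR.le (hg0 t ht))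
          (fun t ht => dilationKernel_le (hR.trans ht) hR.le hL0 hm (hg0 t ht) (hg t ht))
    _ = _ := by
        rw [lintegral_Ioi_rpow_div_self (by linarith) hR, ← ENNReal.ofReal_mul (sq_nonneg _)]
        ring_nf

lemma lintegral_dilationKernel_le {C κ : ℝ} (hR : 1 ≤ R) (hm : 0 ≤ m) (ha : 0 < γ + m)
    (hLa : γ + m < L) (hLb : γ + κ * m < L) (hg0 : ∀ t, 0 < t → 0 ≤ g t)
    (hg_small : ∀ t, 0 < t → t ≤ 1 → g t ≤ C * t ^ (-κ)) (hg_large : ∀ t, 1 ≤ t → g t ≤ t⁻¹) :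
    ∫⁻ t in Ioi 0, ENNReal.ofReal (dilationKernel γ m L R g t ^ 2) / ENNReal.ofReal t
      ≤ ENNReal.ofReal (((C ^ m) ^ 2 / (2 * (L - (γ + κ * m))) + 1 / (2 * (L - (γ + m)))
          + 1 / (2 * (γ + m))) * R ^ (-(2 * (γ + m)))) := by
  have hR0 : 0 < R := zero_lt_one.trans_le hR
  have hL0 : 0 ≤ L := by linarith
  have hg_large_rpow : ∀ t, 1 ≤ t → g t ≤ 1 * t ^ (-1 : ℝ) := fun t ht => by
    rw [one_mul, rpow_neg_one]; exact hg_large t ht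
  have hsmall := setLIntegral_dilationKernel_le_of_subset_Ioc measurableSet_Ioc subset_rfl
    zero_le_one hR0 hL0 hm hLb (fun t ht => hg0 t ht.1) (fun t ht => hg_small t ht.1 ht.2)
  have hmiddle := setLIntegral_dilationKernel_le_of_subset_Ioc (γ := γ) (k := 1) measurableSet_Ioc
    (Ioc_subset_Ioc_left zero_le_one) hR0.le hR0 hL0 hm (by linarith)
    (fun t ht => hg0 t (zero_lt_one.trans ht.1)) (fun t ht => hg_large_rpow t ht.1.le)
  have hlarge := setLIntegral_Ioi_dilationKernel_le (γ := γ) (k := 1) hR0 hL0 hm (by linarith)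
    (fun t ht => hg0 t (hR0.trans ht)) (fun t ht => hg_large_rpow t (hR.trans ht.le))
  simp only [one_rpow, one_pow, one_mul, mul_one, mul_assoc, ← rpow_add hR0]
    at hsmall hmiddle hlarge
  rw [show -(2 * L) + 2 * (L - (γ + m)) = -(2 * (γ + m)) by ring] at hmiddle
  rw [← Ioc_union_Ioi_eq_Ioi zero_le_one, ← Ioc_union_Ioi_eq_Ioi hR]
  refine (lintegral_union_le _ _ _).trans <| (add_le_add le_rfl (lintegral_union_le _ _ _)).trans <|
    (add_le_add hsmall (add_le_add hmiddle hlarge)).trans ?_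
  have hK1 : 0 ≤ (C ^ m) ^ 2 / (2 * (L - (γ + κ * m))) := div_nonneg (sq_nonneg _) (by linarith)
  have hK2 : 0 ≤ 1 / (2 * (L - (γ + m))) := div_nonneg zero_le_one (by linarith)
  have hK3 : 0 ≤ 1 / (2 * (γ + m)) := div_nonneg zero_le_one (by linarith)
  have hX (e : ℝ) : 0 ≤ R ^ e := rpow_nonneg hR0.le e
  rw [← ENNReal.ofReal_add (mul_nonneg hK2 (hX _)) (mul_nonneg hK3 (hX _)),
    ← ENNReal.ofReal_add (mul_nonneg hK1 (hX _))
      (add_nonneg (mul_nonneg hK2 (hX _)) (mul_nonneg hK3 (hX _)))]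
  refine ENNReal.ofReal_le_ofReal ?_
  have hRL : R ^ (-(2 * L)) ≤ R ^ (-(2 * (γ + m))) :=
    rpow_le_rpow_of_exponent_le hR (by linarith)
  nlinarith [mul_le_mul_of_nonneg_left hRL hK1]

end IntegralEstimate

theorem statement14 (n : ℕ) (P : Matrix (Fin n) (Fin n) ℝ) (hP : GoodMatrix P)
    (ρ : Euc n → ℝ) (hρ : IsRho P ρ) (p : ℝ) (hp : 0 < p) (hp1 : p ≤ 1)
    (M : ℤ) (hM : M = ⌊P.trace * (1 / p - 1)⌋)
    (κ C₀ : ℝ) (hκ : 1 ≤ κ) (hC₀ : 0 < C₀)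
    (hκbound : ∀ s : ℝ, 1 ≤ s → ∀ y : Euc n, ‖Aact P s y‖ ≤ C₀ * s ^ κ * ‖y‖)
    (L : ℝ) (hL : P.trace + κ * ((M : ℝ) + 1) < L) :
    ∃ C : ℝ≥0, ∀ x y : Euc n, ρ y < 1 → 2 ≤ ρ x →
      ∫⁻ t in Set.Ioi (0 : ℝ),
          ENNReal.ofReal ((t ^ (-P.trace) * ‖Aact P t⁻¹ y‖ ^ ((M : ℝ) + 1)
            * (1 + ρ x / t) ^ (-L)) ^ 2) / ENNReal.ofReal t
        ≤ C * ENNReal.ofReal (ρ x ^ (-(2 * (P.trace + (M : ℝ) + 1)))) := by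
  have hγ : 0 ≤ P.trace := hP.trace_nonneg
  have hM0 : (0 : ℝ) ≤ M := by
    have : 0 ≤ P.trace * (1 / p - 1) := mul_nonneg hγ (by linarith [one_le_one_div hp hp1])
    exact_mod_cast hM ▸ Int.floor_nonneg.mpr this
  refine ⟨((C₀ ^ ((M : ℝ) + 1)) ^ 2 / (2 * (L - (P.trace + κ * ((M : ℝ) + 1))))
    + 1 / (2 * (L - (P.trace + M + 1))) + 1 / (2 * (P.trace + M + 1))).toNNReal,
    fun x y hy hx => ?_⟩
  have hy1 : ‖y‖ ≤ 1 := (hρ.norm_le hP hy.le).trans hy.le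
  have hsmall (t : ℝ) (ht0 : 0 < t) (ht1 : t ≤ 1) : ‖Aact P t⁻¹ y‖ ≤ C₀ * t ^ (-κ) :=
    calc ‖Aact P t⁻¹ y‖ ≤ C₀ * t⁻¹ ^ κ * ‖y‖ := hκbound _ ((one_le_inv₀ ht0).mpr ht1) y
      _ ≤ C₀ * t⁻¹ ^ κ := mul_le_of_le_one_right (by positivity) hy1
      _ = C₀ * t ^ (-κ) := by rw [inv_rpow ht0.le, rpow_neg ht0.le]
  have hlarge (t : ℝ) (ht : 1 ≤ t) : ‖Aact P t⁻¹ y‖ ≤ t⁻¹ :=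
    (hP.norm_Aact_le y (by positivity) (inv_le_one_of_one_le₀ ht)).trans
      (mul_le_of_le_one_right (by positivity) hy1)
  have hbound := lintegral_dilationKernel_le (g := fun t => ‖Aact P t⁻¹ y‖) (by linarith : 1 ≤ ρ x)
    (by linarith) (by linarith) (by nlinarith) hL (fun t _ => norm_nonneg _) hsmall hlarge
  rw [ENNReal.ofReal_mul' (rpow_nonneg (by linarith) _), ← add_assoc] at hbound
  exact hbound
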